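/- arXiv:math/0512059 — 3 statements merged into one kernel-verified Lean document; each statement's English description precedes it below -/
import Mathlib

section
/- Let G be a (second countable) topological group with a right-invariant Borel measure μ, and let Λ₁, Λ₂ ⊂ G be Borel sets of finite measure. Let f : G → 𝔥 be a bounded weakly measurable function into a Hilbert space 𝔥 such that (g,h) ↦ ⟨f(g), f(h)⟩ is Borel measurable. Then ‖∫_{Λ₂} ∫_{Λ₁} f(gh) dh dg‖² ≤ μ(Λ₂) · ∫_{Λ₁} ∫_{Λ₁} ∫_{Λ₂} ⟨f(g h₁), f(g h₂)⟩ dg dh₁ dh₂ (in particular all these iterated integrals exist). -/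
/-!
Put `F g = ∫_{Λ₁} f (g h) dh`. Jensen's inequality for the convex function `‖·‖²` on the finite
measure `μ|Λ₂` gives `‖∫_{Λ₂} F‖² ≤ μ(Λ₂) ∫_{Λ₂} ‖F‖²`. Pulling the inner product through the
Bochner integral expands `‖F g‖² = ∫∫_{Λ₁ × Λ₁} ⟪f (g h₁), f (g h₂)⟫`, and since this kernel is
bounded and measurable, Fubini moves the `g`-integral innermost.
-/

open MeasureTheory
open scoped ENNReal RealInnerProductSpace

section

variable {α : Type*} [MeasurableSpace α] {ν : Measure α}

theorem sq_norm_integral_le_measureReal_mul_integral_norm_sq {E : Type*} [NormedAddCommGroup E]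
    [NormedSpace ℝ E] [CompleteSpace E] [IsFiniteMeasure ν] {φ : α → E} (hφ : MemLp φ 2 ν) :
    ‖∫ x, φ x ∂ν‖ ^ 2 ≤ ν.real Set.univ * ∫ x, ‖φ x‖ ^ 2 ∂ν := by
  rcases eq_zero_or_neZero ν with rfl | _
  · simp
  have jensen : ‖⨍ x, φ x ∂ν‖ ^ 2 ≤ ⨍ x, ‖φ x‖ ^ 2 ∂ν :=
    (convexOn_univ_norm.pow (fun _ _ => norm_nonneg _) 2).map_average_le
      (continuous_norm.pow 2).continuousOn isClosed_univ (by simp)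
      (hφ.integrable one_le_two) (hφ.integrable_norm_pow two_ne_zero)
  set m := ν.real Set.univ
  have hm : 0 < m := by
    simp [m, measureReal_def, ENNReal.toReal_pos_iff, measure_lt_top, NeZero.ne ν]
  rw [average_eq, average_eq, norm_smul, mul_pow, smul_eq_mul, Real.norm_eq_abs, abs_inv,
    abs_of_pos hm] at jensen
  calc ‖∫ x, φ x ∂ν‖ ^ 2 = m ^ 2 * (m⁻¹ ^ 2 * ‖∫ x, φ x ∂ν‖ ^ 2) := by field_simp
    _ ≤ m ^ 2 * (m⁻¹ * ∫ x, ‖φ x‖ ^ 2 ∂ν) := by gcongr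
    _ = m * ∫ x, ‖φ x‖ ^ 2 ∂ν := by field_simp

theorem sq_norm_integral_eq_integral_integral_inner {E : Type*} [NormedAddCommGroup E]
    [InnerProductSpace ℝ E] [CompleteSpace E] {φ : α → E} (hφ : Integrable φ ν) :
    ‖∫ x, φ x ∂ν‖ ^ 2 = ∫ y, ∫ x, ⟪φ x, φ y⟫ ∂ν ∂ν := by
  rw [← real_inner_self_eq_norm_sq, ← integral_inner hφ]
  congr with y
  rw [real_inner_comm, ← integral_inner hφ]
  simp_rw [real_inner_comm (φ y)]

end

theorem integral_integral_integral_swap_of_norm_le {α β γ : Type*} [MeasurableSpace α]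
    [MeasurableSpace β] [MeasurableSpace γ] {μ : Measure α} {ν : Measure β} {ρ : Measure γ}
    [IsFiniteMeasure μ] [IsFiniteMeasure ν] [IsFiniteMeasure ρ]
    {E : Type*} [NormedAddCommGroup E] [NormedSpace ℝ E] {K : α → β → γ → E}
    (hK : StronglyMeasurable fun p : α × β × γ => K p.1 p.2.1 p.2.2) {C : ℝ}
    (hC : ∀ a b c, ‖K a b c‖ ≤ C) :
    ∫ a, ∫ c, ∫ b, K a b c ∂ν ∂ρ ∂μ = ∫ c, ∫ b, ∫ a, K a b c ∂μ ∂ν ∂ρ := by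
  have hK_ac : Integrable (Function.uncurry fun a c => ∫ b, K a b c ∂ν) (μ.prod ρ) := by
    refine .of_bound ?_ (C * ν.real Set.univ) (.of_forall fun p => ?_)
    · exact (hK.comp_measurable (measurable_fst.fst.prodMk
        (measurable_snd.prodMk measurable_fst.snd))).integral_prod_right'.aestronglyMeasurable
    · exact norm_integral_le_of_norm_le_const (.of_forall fun b => hC _ _ _)
  rw [integral_integral_swap hK_ac]
  refine integral_congr_ae (.of_forall fun c => integral_integral_swap ?_)
  refine .of_bound ?_ C (.of_forall fun p => hC _ _ _)
  exact (hK.comp_measurable (measurable_fst.prodMk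
    (measurable_snd.prodMk measurable_const))).aestronglyMeasurable

theorem norm_double_integral_sq_le_general
    {G : Type*} [TopologicalSpace G] [Group G] [IsTopologicalGroup G]
    [SecondCountableTopology G] [MeasurableSpace G] [BorelSpace G]
    (μ : Measure G)
    {H : Type*} [NormedAddCommGroup H] [InnerProductSpace ℝ H] [CompleteSpace H]
    (Λ₁ Λ₂ : Set G)
    (hμ₁ : μ Λ₁ < ⊤) (hμ₂ : μ Λ₂ < ⊤)
    (f : G → H) (hf : StronglyMeasurable f) (C : ℝ) (hC : ∀ g, ‖f g‖ ≤ C)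
    (hF : Measurable fun p : G × G => ⟪f p.1, f p.2⟫) :
    ‖∫ g in Λ₂, ∫ h in Λ₁, f (g * h) ∂μ ∂μ‖ ^ 2
      ≤ (μ Λ₂).toReal *
        ∫ h₂ in Λ₁, ∫ h₁ in Λ₁, ∫ g in Λ₂, ⟪f (g * h₁), f (g * h₂)⟫ ∂μ ∂μ ∂μ := by
  have : IsFiniteMeasure (μ.restrict Λ₁) := isFiniteMeasure_restrict.mpr hμ₁.ne
  have : IsFiniteMeasure (μ.restrict Λ₂) := isFiniteMeasure_restrict.mpr hμ₂.ne
  have h_int : ∀ g, Integrable (fun h => f (g * h)) (μ.restrict Λ₁) := fun g =>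
    .of_bound (hf.comp_measurable (measurable_const_mul g)).aestronglyMeasurable C
      (.of_forall fun _ => hC _)
  have h_memLp : MemLp (fun g => ∫ h in Λ₁, f (g * h) ∂μ) 2 (μ.restrict Λ₂) := by
    refine .of_bound (hf.comp_measurable measurable_mul).integral_prod_right'.aestronglyMeasurable
      (C * μ.real Λ₁) (.of_forall fun g => ?_)
    simpa using
      norm_integral_le_of_norm_le_const (μ := μ.restrict Λ₁) (.of_forall fun h => hC (g * h))
  have hK : StronglyMeasurable fun p : G × G × G => ⟪f (p.1 * p.2.1), f (p.1 * p.2.2)⟫ :=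
    (hF.comp ((measurable_fst.mul measurable_snd.fst).prodMk
      (measurable_fst.mul measurable_snd.snd))).stronglyMeasurable
  have hK_le : ∀ g h₁ h₂, ‖⟪f (g * h₁), f (g * h₂)⟫‖ ≤ C * C := fun g h₁ h₂ =>
    (norm_inner_le_norm _ _).trans (mul_le_mul (hC _) (hC _) (norm_nonneg _)
      ((norm_nonneg _).trans (hC 1)))
  calc ‖∫ g in Λ₂, ∫ h in Λ₁, f (g * h) ∂μ ∂μ‖ ^ 2
      ≤ (μ Λ₂).toReal * ∫ g in Λ₂, ‖∫ h in Λ₁, f (g * h) ∂μ‖ ^ 2 ∂μ := by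
        simpa [Measure.real] using sq_norm_integral_le_measureReal_mul_integral_norm_sq h_memLp
    _ = (μ Λ₂).toReal * ∫ g in Λ₂, ∫ h₂ in Λ₁, ∫ h₁ in Λ₁, ⟪f (g * h₁), f (g * h₂)⟫ ∂μ ∂μ ∂μ := by
        simp_rw [sq_norm_integral_eq_integral_integral_inner (h_int _)]
    _ = _ := by rw [integral_integral_integral_swap_of_norm_le hK hK_le]

/-- Proposition 2.4: for a bounded measurable Hilbert-space-valued function on a
topological group with right invariant measure,
`‖∫_{Λ₂} ∫_{Λ₁} f(gh) dh dg‖² ≤ μ(Λ₂) ∫_{Λ₁}∫_{Λ₁}∫_{Λ₂} ⟪f(gh₁), f(gh₂)⟫ dg dh₁ dh₂`. -/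
theorem norm_double_integral_sq_le
    {G : Type*} [TopologicalSpace G] [Group G] [IsTopologicalGroup G]
    [SecondCountableTopology G] [MeasurableSpace G] [BorelSpace G]
    (μ : Measure G) [μ.IsMulRightInvariant]
    {H : Type*} [NormedAddCommGroup H] [InnerProductSpace ℝ H] [CompleteSpace H]
    (Λ₁ Λ₂ : Set G) (hΛ₁ : MeasurableSet Λ₁) (hΛ₂ : MeasurableSet Λ₂)
    (hμ₁ : μ Λ₁ < ⊤) (hμ₂ : μ Λ₂ < ⊤)
    (f : G → H) (hf : StronglyMeasurable f) (C : ℝ) (hC : ∀ g, ‖f g‖ ≤ C)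
    (hF : Measurable fun p : G × G => ⟪f p.1, f p.2⟫) :
    ‖∫ g in Λ₂, ∫ h in Λ₁, f (g * h) ∂μ ∂μ‖ ^ 2
      ≤ (μ Λ₂).toReal *
        ∫ h₂ in Λ₁, ∫ h₁ in Λ₁, ∫ g in Λ₂, ⟪f (g * h₁), f (g * h₂)⟫ ∂μ ∂μ ∂μ :=
  norm_double_integral_sq_le_general μ Λ₁ Λ₂ hμ₁ hμ₂ f hf C hC hF
end

section
/- Let G be a second countable topological group with right-invariant Borel measure μ, and {Λₙ} a Følner (space-filling) sequence in a Borel subsemigroup K of G, meaning μ(Λₙ) < ∞, μ(Λₙ) > 0 for large n, and μ(Λₙ Δ (Λₙ g))/μ(Λₙ) → 0 for every g ∈ K. Let f : G → 𝔥 be bounded, weakly measurable, with (g,h) ↦ ⟨f(g), f(h)⟩ Borel. Suppose γ_h := lim_{n→∞} (1/μ(Λₙ)) ∫_{Λₙ} ⟨f(g), f(gh)⟩ dg exists for every h ∈ G. Then for every h₁ ∈ K and h₂ ∈ G, lim_{n→∞} (1/μ(Λₙ)) ∫_{Λₙ} ⟨f(g h₁), f(g h₂)⟩ dg = γ_{h₁⁻¹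 h₂}. -/
open MeasureTheory Filter
open scoped ENNReal RealInnerProductSpace Topology

/-!
Write `h = h₁⁻¹ h₂` and `φ g = ⟪f g, f (g h)⟫`, so that the shifted correlation is `g ↦ φ (g h₁)`.
By right invariance, averaging `φ (· h₁)` over `Λₙ` is averaging `φ` over `Λₙ h₁`, and since `φ`
is bounded by `C²` this differs from the average over `Λₙ` by at most
`C² μ(Λₙ Δ Λₙ h₁) / μ(Λₙ)`, which tends to `0` by the Følner property at `h₁ ∈ K`.
-/

section SetIntegral

variable {α E : Type*} [MeasurableSpace α] {μ : Measure α}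
  [NormedAddCommGroup E] [NormedSpace ℝ E]

theorem norm_setIntegral_sub_setIntegral_le {f : α → E} {C : ℝ} {s t : Set α}
    (hs : MeasurableSet s) (ht : MeasurableSet t) (hsμ : μ s ≠ ∞) (htμ : μ t ≠ ∞)
    (hf : AEStronglyMeasurable f μ) (hC : ∀ x, ‖f x‖ ≤ C) :
    ‖∫ x in s, f x ∂μ - ∫ x in t, f x ∂μ‖ ≤ C * μ.real (symmDiff s t) := by
  have hint : ∀ u, μ u ≠ ∞ → IntegrableOn f u μ := fun u hu =>
    Measure.integrableOn_of_bounded hu hf (Eventually.of_forall hC)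
  have hsplit : ∫ x in s, f x ∂μ - ∫ x in t, f x ∂μ
      = ∫ x in s \ t, f x ∂μ - ∫ x in t \ s, f x ∂μ := by
    rw [← integral_inter_add_sdiff ht (hint s hsμ), ← integral_inter_add_sdiff hs (hint t htμ),
      Set.inter_comm]
    abel
  have hst : μ (s \ t) < ∞ := (measure_mono Set.sdiff_subset).trans_lt hsμ.lt_top
  have hts : μ (t \ s) < ∞ := (measure_mono Set.sdiff_subset).trans_lt htμ.lt_top
  calc ‖∫ x in s, f x ∂μ - ∫ x in t, f x ∂μ‖
      ≤ ‖∫ x in s \ t, f x ∂μ‖ + ‖∫ x in t \ s, f x ∂μ‖ := hsplit ▸ norm_sub_le _ _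
    _ ≤ C * μ.real (s \ t) + C * μ.real (t \ s) :=
        add_le_add (norm_setIntegral_le_of_norm_le_const hst fun x _ => hC x)
          (norm_setIntegral_le_of_norm_le_const hts fun x _ => hC x)
    _ = C * μ.real (symmDiff s t) := by
        rw [Set.symmDiff_def, measureReal_union disjoint_sdiff_sdiff (ht.diff hs), mul_add]

end SetIntegral

section RightInvariant

variable {G E : Type*} [Group G] [MeasurableSpace G] [MeasurableMul G]
  (μ : Measure G) [μ.IsMulRightInvariant]
  [NormedAddCommGroup E] [NormedSpace ℝ E]

theorem measure_image_mul_right (g : G) (s : Set G) : μ ((· * g) '' s) = μ s := by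
  rw [Set.image_mul_right, measure_preimage_mul_right]

theorem setIntegral_comp_mul_right (φ : G → E) (g : G) (s : Set G) :
    ∫ x in s, φ (x * g) ∂μ = ∫ x in (· * g) '' s, φ x ∂μ := by
  set e := MeasurableEquiv.mulRight g
  calc ∫ x in s, φ (x * g) ∂μ = ∫ x in e ⁻¹' (e '' s), φ (e x) ∂μ := by
        rw [Set.preimage_image_eq s e.injective]; rfl
    _ = ∫ x in (· * g) '' s, φ x ∂(μ.map e) := (setIntegral_map_equiv e φ _).symm
    _ = ∫ x in (· * g) '' s, φ x ∂μ := by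
        rw [MeasurableEquiv.coe_mulRight, map_mul_right_eq_self]

theorem tendsto_setAverage_comp_mul_right {ι : Type*} {l : Filter ι} {φ : G → E} {C : ℝ}
    (hφ : AEStronglyMeasurable φ μ) (hC : ∀ x, ‖φ x‖ ≤ C) {Λ : ι → Set G}
    (hΛm : ∀ i, MeasurableSet (Λ i)) (hfin : ∀ i, μ (Λ i) ≠ ∞) {g : G}
    (hFolner : Tendsto (fun i => μ.real (symmDiff (Λ i) ((· * g) '' Λ i)) / μ.real (Λ i)) l (𝓝 0))
    {L : E} (hL : Tendsto (fun i => ⨍ x in Λ i, φ x ∂μ) l (𝓝 L)) :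
    Tendsto (fun i => ⨍ x in Λ i, φ (x * g) ∂μ) l (𝓝 L) := by
  have hdist : ∀ i, dist (⨍ x in Λ i, φ x ∂μ) (⨍ x in Λ i, φ (x * g) ∂μ)
      ≤ C * (μ.real (symmDiff (Λ i) ((· * g) '' Λ i)) / μ.real (Λ i)) := by
    intro i
    have hmeas : MeasurableSet ((· * g) '' Λ i) := by
      rw [Set.image_mul_right]; exact measurable_mul_const _ (hΛm i)
    have hbound := norm_setIntegral_sub_setIntegral_le (hΛm i) hmeas (hfin i)
      ((measure_image_mul_right μ g _).trans_ne (hfin i)) hφ hC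
    rw [dist_eq_norm', setAverage_eq, setAverage_eq, setIntegral_comp_mul_right, ← smul_sub,
      norm_smul, norm_inv, Real.norm_of_nonneg measureReal_nonneg, mul_div_assoc', div_eq_inv_mul,
      norm_sub_rev]
    exact mul_le_mul_of_nonneg_left hbound (inv_nonneg.2 measureReal_nonneg)
  refine hL.congr_dist (squeeze_zero (fun _ => dist_nonneg) hdist ?_)
  simpa using hFolner.const_mul C

end RightInvariant

theorem shifted_correlation_limit_general
    {G : Type*} [TopologicalSpace G] [Group G] [IsTopologicalGroup G]
    [MeasurableSpace G] [BorelSpace G]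
    (μ : Measure G) [μ.IsMulRightInvariant]
    {H : Type*} [NormedAddCommGroup H] [InnerProductSpace ℝ H]
    (K : Set G)
    (Λ : ℕ → Set G) (hΛm : ∀ n, MeasurableSet (Λ n))
    (hfin : ∀ n, μ (Λ n) < ⊤)
    (hFolner : ∀ g ∈ K,
      Tendsto (fun n => (μ (symmDiff (Λ n) ((· * g) '' Λ n))).toReal / (μ (Λ n)).toReal)
        atTop (𝓝 0))
    (f : G → H) (C : ℝ) (hC : ∀ g, ‖f g‖ ≤ C)
    (hF : Measurable fun p : G × G => ⟪f p.1, f p.2⟫)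
    (γ : G → ℝ)
    (hγ : ∀ h : G,
      Tendsto (fun n => (μ (Λ n)).toReal⁻¹ * ∫ g in Λ n, ⟪f g, f (g * h)⟫ ∂μ)
        atTop (𝓝 (γ h))) :
    ∀ h₁ ∈ K, ∀ h₂ : G,
      Tendsto (fun n => (μ (Λ n)).toReal⁻¹ * ∫ g in Λ n, ⟪f (g * h₁), f (g * h₂)⟫ ∂μ)
        atTop (𝓝 (γ (h₁⁻¹ * h₂))) := by
  intro h₁ hh₁ h₂
  set φ : G → ℝ := fun g => ⟪f g, f (g * (h₁⁻¹ * h₂))⟫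
  have hφ : Measurable φ := hF.comp (measurable_id.prodMk (measurable_mul_const _))
  have hφC : ∀ g, ‖φ g‖ ≤ C * C := fun g =>
    (norm_inner_le_norm _ _).trans
      (mul_le_mul (hC _) (hC _) (norm_nonneg _) ((norm_nonneg _).trans (hC g)))
  have hγ' : Tendsto (fun n => ⨍ g in Λ n, φ g ∂μ) atTop (𝓝 (γ (h₁⁻¹ * h₂))) := by
    simpa [φ, setAverage_eq, measureReal_def] using hγ (h₁⁻¹ * h₂)
  have hshift := tendsto_setAverage_comp_mul_right μ hφ.aestronglyMeasurable hφC hΛm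
    (fun n => (hfin n).ne) (hFolner h₁ hh₁) hγ'
  simpa [φ, setAverage_eq, measureReal_def, mul_inv_cancel_left] using hshift

/-- Lemma 2.5′: given a Følner (space-filling) sequence `Λ n` in a Borel
subsemigroup `K` of a second countable topological group with right invariant
measure, and a bounded weakly measurable `f : G → H` whose correlation averages
converge to `γ h`, the shifted correlation averages converge to `γ (h₁⁻¹ h₂)`
for `h₁ ∈ K`, `h₂ ∈ G`. -/
theorem shifted_correlation_limit
    {G : Type*} [TopologicalSpace G] [Group G] [IsTopologicalGroup G]
    [SecondCountableTopology G] [MeasurableSpace G] [BorelSpace G]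
    (μ : Measure G) [μ.IsMulRightInvariant]
    {H : Type*} [NormedAddCommGroup H] [InnerProductSpace ℝ H] [CompleteSpace H]
    (K : Set G) (hK : MeasurableSet K) (hKmul : ∀ a ∈ K, ∀ b ∈ K, a * b ∈ K)
    (Λ : ℕ → Set G) (hΛK : ∀ n, Λ n ⊆ K) (hΛm : ∀ n, MeasurableSet (Λ n))
    (hfin : ∀ n, μ (Λ n) < ⊤) (hpos : ∀ᶠ n in atTop, 0 < μ (Λ n))
    (hFolner : ∀ g ∈ K,
      Tendsto (fun n => (μ (symmDiff (Λ n) ((· * g) '' Λ n))).toReal / (μ (Λ n)).toReal)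
        atTop (𝓝 0))
    (f : G → H) (C : ℝ) (hC : ∀ g, ‖f g‖ ≤ C)
    (hfw : ∀ x : H, Measurable fun g => ⟪f g, x⟫)
    (hF : Measurable fun p : G × G => ⟪f p.1, f p.2⟫)
    (γ : G → ℝ)
    (hγ : ∀ h : G,
      Tendsto (fun n => (μ (Λ n)).toReal⁻¹ * ∫ g in Λ n, ⟪f g, f (g * h)⟫ ∂μ)
        atTop (𝓝 (γ h))) :
    ∀ h₁ ∈ K, ∀ h₂ : G,
      Tendsto (fun n => (μ (Λ n)).toReal⁻¹ * ∫ g in Λ n, ⟪f (g * h₁), f (g * h₂)⟫ ∂μ)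
        atTop (𝓝 (γ (h₁⁻¹ * h₂))) :=
  shifted_correlation_limit_general μ K Λ hΛm hfin hFolner f C hC hF γ hγ
end

section
/- Let G be an abelian group with a σ-algebra and measure μ, M ⊂ Hom(G,G) translational, and (X, Σ, ν, T, G) a measure-preserving dynamical system over G with T_e = id. Fix k ≥ 1 and suppose that for all real-valued f₀, …, f_{k−1} ∈ L^∞(ν) and all pairwise distinct φ₁, …, φ_{k−1} ∈ M (with φ₀ ≡ e), lim_n (1/μ(Λₙ)) ∫_{Λₙ} ∫_X ∏_{j=0}^{k−1} f_j ∘ T_{φ_j(g)} dν dg = ∏_{j=0}^{k−1} ∫_X f_j dν. Given real-valued f₁, …, f_k ∈ L^∞(ν) and pairwise distinct φ₁, …, φ_k ∈ M, set u_h := ∏_{j=1}^k f_j ∘ T_{φ_j(h)} − κ ∈ L²(ν), where κ := ∏_{j=1}^k ∫_X f_j dν. Then for every h ∈ G the limit γ_h := lim_n (1/μ(Λₙ)) ∫_{Λₙ} ⟨u_g, u_{gh}⟩_{L²(ν)} dg exists and equals ∏_{j=1}^k ∫_X f_j · (f_j ∘ T_{φ_j(h)}) dν − κ². -/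
open MeasureTheory Filter
open scoped ENNReal Topology

private lemma bdd_integrable {X : Type*} [MeasurableSpace X] (ν : Measure X) [IsFiniteMeasure ν]
    {f : X → ℝ} (hf : Measurable f) {C : ℝ} (hC : ∀ x, |f x| ≤ C) :
    Integrable f ν :=
  (integrable_const C).mono' hf.aestronglyMeasurable
    (Filter.Eventually.of_forall fun x => by simpa using hC x)

private lemma abs_integral_le {X : Type*} [MeasurableSpace X] (ν : Measure X)
    [IsProbabilityMeasure ν] {f : X → ℝ} {C : ℝ} (hC : ∀ x, |f x| ≤ C) :
    |∫ x, f x ∂ν| ≤ C := by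
  have := norm_integral_le_of_norm_le_const (μ := ν) (f := f) (C := C)
    (Filter.Eventually.of_forall fun x => by simpa using hC x)
  simpa using this

private lemma eventually_integrableOn {G : Type*} [MeasurableSpace G] (μ : Measure G)
    (Λ : ℕ → Set G) {u : G → ℝ} {L : ℝ} (hL : L ≠ 0)
    (h : Tendsto (fun n => (μ (Λ n)).toReal⁻¹ * ∫ g in Λ n, u g ∂μ) atTop (𝓝 L)) :
    ∀ᶠ n in atTop, IntegrableOn u (Λ n) μ := by
  filter_upwards [h.eventually_ne hL] with n hn
  by_contra hint
  exact hn (by rw [integral_undef hint, mul_zero])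

/-- Proposition 4.3: for a measure preserving system over an abelian group `G`
with `T_e = id` and a translational set `M` of endomorphisms, if the `k`-fold
averages (one factor untransformed, via `ψ 0 ≡ e`) converge to the product of
the means, then for `u_h = ∏ⱼ fⱼ ∘ T_{φⱼ(h)} − κ` the correlation limit
`γ_h = limₙ (1/μ(Λₙ)) ∫_{Λₙ} ⟨u_g, u_{gh}⟩ dg` exists and equals
`∏ⱼ ∫ fⱼ (fⱼ ∘ T_{φⱼ(h)}) dν − κ²`. Here `Fin (k+1)` indexes the `k+1`
functions. -/
theorem correlation_limit_of_lower_order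
    {G : Type*} [CommGroup G] [MeasurableSpace G] (μ : Measure G)
    (Λ : ℕ → Set G) (hΛmeas : ∀ n, MeasurableSet (Λ n))
    (hfin : ∀ n, μ (Λ n) < ⊤) (hpos : ∀ᶠ n in atTop, 0 < μ (Λ n))
    {X : Type*} [MeasurableSpace X] (ν : Measure X) [IsProbabilityMeasure ν]
    (T : G → X → X) (hTmeas : ∀ g, Measurable (T g))
    (hTmul : ∀ g h : G, T (g * h) = T g ∘ T h) (hTe : T 1 = id)
    (hTpres : ∀ (g : G) (A : Set X), MeasurableSet A → ν (T g ⁻¹' A) = ν A)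
    (M : Set (G → G)) (hMhom : ∀ φ ∈ M, ∀ a b : G, φ (a * b) = φ a * φ b)
    (htrans : ∀ φ₁ ∈ M, ∀ φ₂ ∈ M, φ₁ ≠ φ₂ → (fun g => φ₂ g * (φ₁ g)⁻¹) ∈ M)
    (k : ℕ)
    -- hypothesis 2[k-1]: the (k+1)-fold averages, with one trivial factor,
    -- converge to the product of the means
    (hlow : ∀ (F : Fin (k + 1) → X → ℝ),
      (∀ j, Measurable (F j)) → (∀ j, ∃ C : ℝ, ∀ x, |F j x| ≤ C) →
      ∀ (ψ : Fin (k + 1) → G → G), (ψ 0 = fun _ => (1 : G)) →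
      (∀ j : Fin (k + 1), j ≠ 0 → ψ j ∈ M) → Function.Injective ψ →
      Tendsto (fun n => (μ (Λ n)).toReal⁻¹ *
          ∫ g in Λ n, ∫ x, ∏ j, F j (T (ψ j g) x) ∂ν ∂μ)
        atTop (𝓝 (∏ j, ∫ x, F j x ∂ν)))
    (f : Fin (k + 1) → X → ℝ)
    (hfmeas : ∀ j, Measurable (f j)) (hfbd : ∀ j, ∃ C : ℝ, ∀ x, |f j x| ≤ C)
    (φ : Fin (k + 1) → G → G) (hφM : ∀ j, φ j ∈ M)
    (hφinj : Function.Injective φ) :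
    ∀ h : G,
      Tendsto (fun n => (μ (Λ n)).toReal⁻¹ *
          ∫ g in Λ n,
            ∫ x, ((∏ j, f j (T (φ j g) x)) - ∏ j, ∫ y, f j y ∂ν) *
              ((∏ j, f j (T (φ j (g * h)) x)) - ∏ j, ∫ y, f j y ∂ν) ∂ν ∂μ)
        atTop
        (𝓝 ((∏ j, ∫ x, f j x * f j (T (φ j h) x) ∂ν) - (∏ j, ∫ y, f j y ∂ν) ^ 2)) := by
  intro h
  set κ : ℝ := ∏ j, ∫ y, f j y ∂ν with hκ
  -- pushforward invariance
  have hmap : ∀ g : G, Measure.map (T g) ν = ν := fun g =>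
    Measure.ext fun A hA => by rw [Measure.map_apply (hTmeas g) hA, hTpres g A hA]
  have push : ∀ (g : G) (Q : X → ℝ), Measurable Q → ∫ x, Q (T g x) ∂ν = ∫ x, Q x ∂ν := by
    intro g Q hQ
    conv_rhs => rw [← hmap g]
    rw [integral_map (hTmeas g).aemeasurable hQ.aestronglyMeasurable]
  -- the shifted homomorphisms
  set ψ : Fin (k + 1) → G → G := fun j g => φ j g * (φ 0 g)⁻¹ with hψdef
  have hψ0 : ψ 0 = fun _ => (1 : G) := funext fun g => mul_inv_cancel _
  have hψM : ∀ j : Fin (k + 1), j ≠ 0 → ψ j ∈ M := fun j hj =>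
    htrans (φ 0) (hφM 0) (φ j) (hφM j) (fun e => hj ((hφinj e).symm))
  have hψinj : Function.Injective ψ := by
    intro i j hij
    apply hφinj
    funext g
    have h1 := congrFun hij g
    simp only [hψdef] at h1
    exact mul_right_cancel h1
  -- key lemma: tendsto + eventual integrability for any bounded measurable tuple
  have key : ∀ (H : Fin (k + 1) → X → ℝ), (∀ j, Measurable (H j)) →
      (∀ j, ∃ C : ℝ, ∀ x, |H j x| ≤ C) →
      Tendsto (fun n => (μ (Λ n)).toReal⁻¹ *
          ∫ g in Λ n, ∫ x, ∏ j, H j (T (ψ j g) x) ∂ν ∂μ)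
        atTop (𝓝 (∏ j, ∫ x, H j x ∂ν)) ∧
      (∀ᶠ n in atTop,
        IntegrableOn (fun g => ∫ x, ∏ j, H j (T (ψ j g) x) ∂ν) (Λ n) μ) := by
    intro H hHmeas hHbd
    refine ⟨hlow H hHmeas hHbd ψ hψ0 hψM hψinj, ?_⟩
    choose B hB using hHbd
    set c : Fin (k + 1) → ℝ := fun j => |B j| + 1 with hc
    have hcpos : ∀ j, 0 < c j := fun j => by positivity
    have hHb : ∀ j x, |H j x| ≤ |B j| := fun j x => (hB j x).trans (le_abs_self _)
    set HT : Finset (Fin (k + 1)) → Fin (k + 1) → X → ℝ :=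
      fun t j x => if j ∈ t then H j x + c j else 1 with hHT
    have hHTmeas : ∀ t j, Measurable (HT t j) := by
      intro t j
      by_cases hj : j ∈ t <;> simp only [hHT, hj, if_true, if_false]
      · exact (hHmeas j).add_const _
      · exact measurable_const
    have hHTbd : ∀ t j, ∀ x, |HT t j x| ≤ |B j| + c j + 1 := by
      intro t j x
      by_cases hj : j ∈ t <;> simp only [hHT, hj, if_true, if_false]
      · calc |H j x + c j| ≤ |H j x| + |c j| := abs_add_le _ _
          _ ≤ |B j| + c j + 1 := by
            have h1 := hHb j x
            have h2 := (hcpos j).le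
            rw [abs_of_nonneg h2]; linarith
      · have := hcpos j
        rw [abs_one]; linarith [abs_nonneg (B j)]
    have hint : ∀ t : Finset (Fin (k + 1)), ∀ᶠ n in atTop,
        IntegrableOn (fun g => ∫ x, ∏ j, HT t j (T (ψ j g) x) ∂ν) (Λ n) μ := by
      intro t
      have hLpos : 0 < ∏ j, ∫ x, HT t j x ∂ν := by
        apply Finset.prod_pos
        intro j _
        by_cases hj : j ∈ t
        · simp only [hHT, hj, if_true]
          rw [integral_add (bdd_integrable ν (hHmeas j) (hHb j)) (integrable_const _),
            integral_const]
          have h1 := abs_le.mp (abs_integral_le ν (hHb j))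
          simp only [measureReal_def, measure_univ, ENNReal.toReal_one, one_smul, hc]
          linarith [h1.1]
        · simp only [hHT, hj, if_false, integral_const, measureReal_def, measure_univ, ENNReal.toReal_one,
            one_smul]
          norm_num
      exact eventually_integrableOn μ Λ (ne_of_gt hLpos)
        (hlow (HT t) (hHTmeas t) (fun j => ⟨|B j| + c j + 1, hHTbd t j⟩) ψ hψ0 hψM hψinj)
    have hall : ∀ᶠ n in atTop, ∀ t : Finset (Fin (k + 1)),
        IntegrableOn (fun g => ∫ x, ∏ j, HT t j (T (ψ j g) x) ∂ν) (Λ n) μ :=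
      eventually_all.2 hint
    filter_upwards [hall] with n hn
    -- pointwise decomposition of the integrand in g
    have heq : ∀ g : G, ∫ x, ∏ j, H j (T (ψ j g) x) ∂ν =
        ∑ t ∈ (Finset.univ : Finset (Fin (k + 1))).powerset,
          (∏ j ∈ Finset.univ \ t, (-(c j))) *
            ∫ x, ∏ j, HT t j (T (ψ j g) x) ∂ν := by
      intro g
      have hxint : ∀ t : Finset (Fin (k + 1)),
          Integrable (fun x => ∏ j, HT t j (T (ψ j g) x)) ν := by
        intro t
        apply bdd_integrable ν
          (Finset.measurable_prod _ fun j _ => (hHTmeas t j).comp (hTmeas _))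
          (C := ∏ j, (|B j| + c j + 1))
        intro x
        rw [Finset.abs_prod]
        apply Finset.prod_le_prod (fun j _ => abs_nonneg _) (fun j _ => hHTbd t j _)
      calc ∫ x, ∏ j, H j (T (ψ j g) x) ∂ν
          = ∫ x, ∑ t ∈ (Finset.univ : Finset (Fin (k + 1))).powerset,
              (∏ j ∈ Finset.univ \ t, (-(c j))) * ∏ j, HT t j (T (ψ j g) x) ∂ν := by
            apply integral_congr_ae (Filter.Eventually.of_forall fun x => ?_)
            have e1 : ∏ j, H j (T (ψ j g) x)
                = ∏ j, ((H j (T (ψ j g) x) + c j) + (-(c j))) :=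
              Finset.prod_congr rfl fun j _ => by ring
            rw [e1, Finset.prod_add]
            apply Finset.sum_congr rfl
            intro t ht
            rw [mul_comm]
            congr 1
            rw [show ∏ j, HT t j (T (ψ j g) x)
                = ∏ j, (if j ∈ t then H j (T (ψ j g) x) + c j else 1) from
              Finset.prod_congr rfl fun j _ => by simp only [hHT]]
            rw [Finset.prod_ite_mem, Finset.univ_inter]
        _ = ∑ t ∈ (Finset.univ : Finset (Fin (k + 1))).powerset,
              (∏ j ∈ Finset.univ \ t, (-(c j))) *
                ∫ x, ∏ j, HT t j (T (ψ j g) x) ∂ν := by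
            rw [integral_finset_sum]
            · exact Finset.sum_congr rfl fun t _ => integral_const_mul _ _
            · exact fun t _ => (hxint t).const_mul _
    have : IntegrableOn (fun g =>
        ∑ t ∈ (Finset.univ : Finset (Fin (k + 1))).powerset,
          (∏ j ∈ Finset.univ \ t, (-(c j))) *
            ∫ x, ∏ j, HT t j (T (ψ j g) x) ∂ν) (Λ n) μ :=
      integrable_finset_sum _ fun t _ => (hn t).const_mul _
    exact this.congr (ae_of_all _ fun g => (heq g).symm)

  -- the three tuples of functions
  choose C hC using hfbd
  have hCb : ∀ j x, |f j x| ≤ |C j| := fun j x => (hC j x).trans (le_abs_self _)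
  set FA : Fin (k + 1) → X → ℝ := fun j x => f j x * f j (T (φ j h) x) with hFA
  set FC : Fin (k + 1) → X → ℝ := fun j x => f j (T (φ j h) x) with hFC
  have hFAmeas : ∀ j, Measurable (FA j) := fun j =>
    (hfmeas j).mul ((hfmeas j).comp (hTmeas _))
  have hFCmeas : ∀ j, Measurable (FC j) := fun j => (hfmeas j).comp (hTmeas _)
  have hFAbd : ∀ j, ∃ D : ℝ, ∀ x, |FA j x| ≤ D := by
    intro j
    refine ⟨|C j| * |C j|, fun x => ?_⟩
    simp only [hFA]
    rw [abs_mul]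
    exact mul_le_mul (hCb j x) (hCb j _) (abs_nonneg _) (abs_nonneg _)
  have hFCbd : ∀ j, ∃ D : ℝ, ∀ x, |FC j x| ≤ D := fun j => ⟨|C j|, fun x => hCb j _⟩
  obtain ⟨hAtd, hAint⟩ := key FA hFAmeas hFAbd
  obtain ⟨hBtd, hBint⟩ := key f hfmeas (fun j => ⟨C j, hC j⟩)
  obtain ⟨hCtd, hCint⟩ := key FC hFCmeas hFCbd
  have hFCeq : (∏ j, ∫ x, FC j x ∂ν) = κ := by
    rw [hκ]
    exact Finset.prod_congr rfl fun j _ => push (φ j h) (f j) (hfmeas j)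
  -- pushforward of tuple products from φ to ψ
  have hφψT : ∀ (j : Fin (k + 1)) (g : G) (x : X),
      T (φ j g) x = T (ψ j g) (T (φ 0 g) x) := by
    intro j g x
    have e : φ j g = ψ j g * φ 0 g := by
      simp only [hψdef]
      group
    rw [e, hTmul]
    rfl
  have hpushprod : ∀ (F : Fin (k + 1) → X → ℝ), (∀ j, Measurable (F j)) → ∀ g : G,
      ∫ x, ∏ j, F j (T (φ j g) x) ∂ν = ∫ x, ∏ j, F j (T (ψ j g) x) ∂ν := by
    intro F hF g
    have e : (fun x => ∏ j, F j (T (φ j g) x))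
        = fun x => (fun y => ∏ j, F j (T (ψ j g) y)) (T (φ 0 g) x) :=
      funext fun x => Finset.prod_congr rfl fun j _ => by rw [hφψT j g x]
    rw [e]
    exact push (φ 0 g) _ (Finset.measurable_prod _ fun j _ => (hF j).comp (hTmeas _))
  -- integrability in x of tuple products
  have hprodint : ∀ (F : Fin (k + 1) → X → ℝ) (D : Fin (k + 1) → ℝ),
      (∀ j, Measurable (F j)) → (∀ j x, |F j x| ≤ D j) → ∀ w : Fin (k + 1) → G,
      Integrable (fun x => ∏ j, F j (T (w j) x)) ν := by
    intro F D hFm hFb w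
    apply bdd_integrable ν
      (Finset.measurable_prod _ fun j _ => (hFm j).comp (hTmeas _)) (C := ∏ j, D j)
    intro x
    rw [Finset.abs_prod]
    exact Finset.prod_le_prod (fun j _ => abs_nonneg _) (fun j _ => hFb j _)
  -- pointwise decomposition of the correlation integrand
  have hDeq : ∀ g : G,
      (∫ x, ((∏ j, f j (T (φ j g) x)) - κ) * ((∏ j, f j (T (φ j (g * h)) x)) - κ) ∂ν)
        = (∫ x, ∏ j, FA j (T (ψ j g) x) ∂ν) - κ * (∫ x, ∏ j, f j (T (ψ j g) x) ∂ν)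
          - κ * (∫ x, ∏ j, FC j (T (ψ j g) x) ∂ν) + κ * κ := by
    intro g
    have hinteg : ∀ x, ((∏ j, f j (T (φ j g) x)) - κ) * ((∏ j, f j (T (φ j (g * h)) x)) - κ)
        = (∏ j, FA j (T (φ j g) x)) - κ * (∏ j, f j (T (φ j g) x))
          - κ * (∏ j, FC j (T (φ j g) x)) + κ * κ := by
      intro x
      have hb : ∀ j : Fin (k + 1), f j (T (φ j (g * h)) x) = FC j (T (φ j g) x) := by
        intro j
        have e : T (φ j (g * h)) x = T (φ j h) (T (φ j g) x) := by
          rw [hMhom (φ j) (hφM j) g h, mul_comm (φ j g) (φ j h), hTmul]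
          rfl
        simp only [hFC, e]
      have e1 : ∏ j, f j (T (φ j (g * h)) x) = ∏ j, FC j (T (φ j g) x) :=
        Finset.prod_congr rfl fun j _ => hb j
      have e2 : ∏ j, FA j (T (φ j g) x)
          = (∏ j, f j (T (φ j g) x)) * ∏ j, FC j (T (φ j g) x) := by
        rw [← Finset.prod_mul_distrib]
      rw [e1, e2]
      ring
    have iA : Integrable (fun x => ∏ j, FA j (T (φ j g) x)) ν :=
      hprodint FA (fun j => |C j| * |C j|) hFAmeas
        (fun j x => by
          simp only [hFA]; rw [abs_mul]
          exact mul_le_mul (hCb j x) (hCb j _) (abs_nonneg _) (abs_nonneg _)) _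
    have iB : Integrable (fun x => ∏ j, f j (T (φ j g) x)) ν :=
      hprodint f (fun j => |C j|) hfmeas (fun j x => hCb j _) _
    have iC : Integrable (fun x => ∏ j, FC j (T (φ j g) x)) ν :=
      hprodint FC (fun j => |C j|) hFCmeas (fun j x => hCb j _) _
    calc (∫ x, ((∏ j, f j (T (φ j g) x)) - κ) * ((∏ j, f j (T (φ j (g * h)) x)) - κ) ∂ν)
        = ∫ x, ((∏ j, FA j (T (φ j g) x)) - κ * (∏ j, f j (T (φ j g) x))
            - κ * (∏ j, FC j (T (φ j g) x)) + κ * κ) ∂ν :=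
          integral_congr_ae (Filter.Eventually.of_forall hinteg)
      _ = (∫ x, ∏ j, FA j (T (φ j g) x) ∂ν) - κ * (∫ x, ∏ j, f j (T (φ j g) x) ∂ν)
            - κ * (∫ x, ∏ j, FC j (T (φ j g) x) ∂ν) + κ * κ := by
          have iB' : Integrable (fun x => κ * ∏ j, f j (T (φ j g) x)) ν :=
            iB.const_mul κ
          have iC' : Integrable (fun x => κ * ∏ j, FC j (T (φ j g) x)) ν :=
            iC.const_mul κ
          have i2 : Integrable (fun x => (∏ j, FA j (T (φ j g) x))
              - κ * ∏ j, f j (T (φ j g) x)) ν := by exact iA.sub iB'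
          have i3 : Integrable (fun x => (∏ j, FA j (T (φ j g) x))
              - κ * (∏ j, f j (T (φ j g) x)) - κ * ∏ j, FC j (T (φ j g) x)) ν := by
            exact i2.sub iC'
          rw [integral_add i3 (integrable_const _),
            integral_sub i2 iC', integral_sub iA iB',
            integral_const, integral_const_mul, integral_const_mul]
          simp [measure_univ]
      _ = (∫ x, ∏ j, FA j (T (ψ j g) x) ∂ν) - κ * (∫ x, ∏ j, f j (T (ψ j g) x) ∂ν)
            - κ * (∫ x, ∏ j, FC j (T (ψ j g) x) ∂ν) + κ * κ := by
          rw [hpushprod FA hFAmeas g, hpushprod f hfmeas g, hpushprod FC hFCmeas g]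
  -- eventual decomposition of the averages
  have hfinal : ∀ᶠ n in atTop,
      (μ (Λ n)).toReal⁻¹ * ∫ g in Λ n,
          ∫ x, ((∏ j, f j (T (φ j g) x)) - κ) *
            ((∏ j, f j (T (φ j (g * h)) x)) - κ) ∂ν ∂μ
        = (μ (Λ n)).toReal⁻¹ *
            (∫ g in Λ n, ∫ x, ∏ j, FA j (T (ψ j g) x) ∂ν ∂μ)
          - κ * ((μ (Λ n)).toReal⁻¹ *
            ∫ g in Λ n, ∫ x, ∏ j, f j (T (ψ j g) x) ∂ν ∂μ)
          - κ * ((μ (Λ n)).toReal⁻¹ *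
            ∫ g in Λ n, ∫ x, ∏ j, FC j (T (ψ j g) x) ∂ν ∂μ)
          + κ * κ := by
    filter_upwards [hAint, hBint, hCint, hpos] with n hA' hB' hC' hp
    have hm0 : (μ (Λ n)).toReal ≠ 0 :=
      ne_of_gt (ENNReal.toReal_pos (ne_of_gt hp) (hfin n).ne)
    have e1 : (∫ g in Λ n,
          ∫ x, ((∏ j, f j (T (φ j g) x)) - κ) *
            ((∏ j, f j (T (φ j (g * h)) x)) - κ) ∂ν ∂μ)
        = ∫ g in Λ n,
            ((∫ x, ∏ j, FA j (T (ψ j g) x) ∂ν)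
              - κ * (∫ x, ∏ j, f j (T (ψ j g) x) ∂ν)
              - κ * (∫ x, ∏ j, FC j (T (ψ j g) x) ∂ν) + κ * κ) ∂μ :=
      integral_congr_ae (ae_of_all _ fun g => hDeq g)
    have jB : IntegrableOn (fun g => κ * ∫ x, ∏ j, f j (T (ψ j g) x) ∂ν) (Λ n) μ :=
      hB'.const_mul κ
    have jC : IntegrableOn (fun g => κ * ∫ x, ∏ j, FC j (T (ψ j g) x) ∂ν) (Λ n) μ :=
      hC'.const_mul κ
    have j2 : IntegrableOn (fun g => (∫ x, ∏ j, FA j (T (ψ j g) x) ∂ν)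
        - κ * ∫ x, ∏ j, f j (T (ψ j g) x) ∂ν) (Λ n) μ := by exact hA'.sub jB
    have j3 : IntegrableOn (fun g => (∫ x, ∏ j, FA j (T (ψ j g) x) ∂ν)
        - κ * (∫ x, ∏ j, f j (T (ψ j g) x) ∂ν)
        - κ * ∫ x, ∏ j, FC j (T (ψ j g) x) ∂ν) (Λ n) μ := by exact j2.sub jC
    rw [e1,
      integral_add j3 (integrableOn_const (hfin n).ne),
      integral_sub j2 jC, integral_sub hA' jB,
      setIntegral_const, measureReal_def, integral_const_mul, integral_const_mul, smul_eq_mul]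
    field_simp
  -- the limit of the decomposed averages
  have hlim : Tendsto (fun n =>
      (μ (Λ n)).toReal⁻¹ *
          (∫ g in Λ n, ∫ x, ∏ j, FA j (T (ψ j g) x) ∂ν ∂μ)
        - κ * ((μ (Λ n)).toReal⁻¹ *
          ∫ g in Λ n, ∫ x, ∏ j, f j (T (ψ j g) x) ∂ν ∂μ)
        - κ * ((μ (Λ n)).toReal⁻¹ *
          ∫ g in Λ n, ∫ x, ∏ j, FC j (T (ψ j g) x) ∂ν ∂μ)
        + κ * κ) atTop
      (𝓝 ((∏ j, ∫ x, FA j x ∂ν) - κ * (∏ j, ∫ x, f j x ∂ν)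
        - κ * (∏ j, ∫ x, FC j x ∂ν) + κ * κ)) :=
    ((hAtd.sub (hBtd.const_mul κ)).sub (hCtd.const_mul κ)).add tendsto_const_nhds
  have hval : (∏ j, ∫ x, FA j x ∂ν) - κ * (∏ j, ∫ x, f j x ∂ν)
      - κ * (∏ j, ∫ x, FC j x ∂ν) + κ * κ
      = (∏ j, ∫ x, f j x * f j (T (φ j h) x) ∂ν) - κ ^ 2 := by
    rw [hFCeq]
    have e2 : (∏ j, ∫ x, f j x ∂ν) = κ := hκ.symm
    have e3 : (∏ j, ∫ x, FA j x ∂ν) = ∏ j, ∫ x, f j x * f j (T (φ j h) x) ∂ν := by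
      simp only [hFA]
    rw [e2, e3]
    ring
  rw [hval] at hlim
  exact Tendsto.congr' (Filter.EventuallyEq.symm hfinal) hlim
end
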